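/- arXiv:2212.11644 — 3 statements merged into one kernel-verified Lean document; each statement's English description precedes it below -/
import Mathlib

section
/- If A is an n×n poset matrix and B is an m×m poset matrix, then the block matrix C = [[B, 0], [V, A']] is a poset matrix, where A' is A with its first row and column deleted, the top-right m×(n-1) block is zero, and the bottom-left (n-1)×m block V has entries v_{y,z} = A y 0 (the entry of A in row y, column 1) for every column z of V. (This is the first partial composition A ∘₁ B.) -/
def IsPosetMatrix {α : Type*} (A : α → α → Bool) : Prop :=
  (∀ i, A i i = true) ∧
  (∀ i j, i ≠ j → A i j = true → A j i = false) ∧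
  (∀ i j k, A i j = true → A j k = true → A i k = true)

/-- The first partial composition `A ∘₁ B`: the block matrix `[[B, 0], [V, A']]`
where `A'` is `A` with its first row and column deleted and every column of `V`
equals the first column of `A` (restricted to rows `2, …, n`).
Here `Sum.inl` indexes the `m` new elements (the copy of `B`) and `Sum.inr`
indexes the remaining `n` old elements of the `(n+1)`-element matrix `A`. -/
def comp1 {n m : ℕ} (A : Fin (n + 1) → Fin (n + 1) → Bool)
    (B : Fin m → Fin m → Bool) :
    (Fin m ⊕ Fin n) → (Fin m ⊕ Fin n) → Bool
  | Sum.inl p, Sum.inl q => B p q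
  | Sum.inl _, Sum.inr _ => false
  | Sum.inr y, Sum.inl _ => A y.succ 0
  | Sum.inr y, Sum.inr z => A y.succ z.succ

section Comp1

variable {n m : ℕ} {A : Fin (n + 1) → Fin (n + 1) → Bool} {B : Fin m → Fin m → Bool}

theorem comp1_self (hA : ∀ i, A i i = true) (hB : ∀ p, B p p = true) :
    ∀ x, comp1 A B x x = true
  | .inl p => hB p
  | .inr y => hA y.succ

theorem comp1_antisymm (hA : ∀ i j, i ≠ j → A i j = true → A j i = false)
    (hB : ∀ p q, p ≠ q → B p q = true → B q p = false) :
    ∀ x x', x ≠ x' → comp1 A B x x' = true → comp1 A B x' x = false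
  | .inl p, .inl q, hne, h => hB p q (hne ∘ congrArg Sum.inl) h
  | .inr y, .inr z, hne, h =>
    hA y.succ z.succ (hne ∘ congrArg Sum.inr ∘ (Fin.succ_injective n ·)) h
  | .inl _, .inr _, _, h => absurd h Bool.false_ne_true
  | .inr _, .inl _, _, _ => rfl

/-- A chain never leaves the `B` block, since the top-right block is zero; a chain from the
`A'` block into it is a chain of `A` ending at its first element. -/
theorem comp1_trans (hA : ∀ i j k, A i j = true → A j k = true → A i k = true)
    (hB : ∀ p q r, B p q = true → B q r = true → B p r = true) :
    ∀ x x' x'', comp1 A B x x' = true → comp1 A B x' x'' = true → comp1 A B x x'' = true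
  | .inl p, .inl q, .inl r, h₁, h₂ => hB p q r h₁ h₂
  | .inr _, .inl _, .inl _, h₁, _ => h₁
  | .inr y, .inr z, .inl _, h₁, h₂ => hA y.succ z.succ 0 h₁ h₂
  | .inr y, .inr z, .inr w, h₁, h₂ => hA y.succ z.succ w.succ h₁ h₂
  | .inl _, .inr _, _, h₁, _ => absurd h₁ Bool.false_ne_true
  | _, .inl _, .inr _, _, h₂ => absurd h₂ Bool.false_ne_true

end Comp1

/-- The first partial composition `A ∘₁ B` of poset matrices is a poset matrix. -/
theorem comp1_isPosetMatrix {n m : ℕ} (A : Fin (n + 1) → Fin (n + 1) → Bool)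
    (B : Fin m → Fin m → Bool) (hA : IsPosetMatrix A) (hB : IsPosetMatrix B) :
    IsPosetMatrix (comp1 A B) :=
  ⟨comp1_self hA.1 hB.1, comp1_antisymm hA.2.1 hB.2.1, comp1_trans hA.2.2 hB.2.2⟩
end

section
/- If A is an n×n poset matrix and B is an m×m poset matrix, then the block matrix C = [[A', 0], [U, B]] is a poset matrix, where A' is A with its last row and column deleted, the top-right (n-1)×m block is zero, and the bottom-left m×(n-1) block U has entries u_{y,z} = A (n-1) z (the last row of A restricted to the first n-1 columns) for every row y of U. (This is the first partial composition A ∘ₙ B.) -/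
/-- The first partial composition `A ∘ₙ B`: the block matrix `[[A', 0], [U, B]]`
where `A'` is `A` with its last row and column deleted and every row of `U`
equals the last row of `A` (restricted to the first `n` columns).
Here `Sum.inl` indexes the remaining `n` old elements of the `(n+1)`-element
matrix `A` and `Sum.inr` indexes the `m` new elements (the copy of `B`). -/
def compLast {n m : ℕ} (A : Fin (n + 1) → Fin (n + 1) → Bool)
    (B : Fin m → Fin m → Bool) :
    (Fin n ⊕ Fin m) → (Fin n ⊕ Fin m) → Bool
  | Sum.inl y, Sum.inl z => A y.castSucc z.castSucc
  | Sum.inl _, Sum.inr _ => false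
  | Sum.inr _, Sum.inl z => A (Fin.last n) z.castSucc
  | Sum.inr p, Sum.inr q => B p q


/-! A block matrix `[[R, 0], [U, S]]` whose rows of `U` all equal one vector `u` is a poset
matrix as soon as `R` and `S` are and `u` is an up-set of `R`; the only mixed transitivity
constraint is `u y ∧ R y z → u z`. For `A ∘ₙ B` the vector `u` is the last row of `A`, which
is an up-set by transitivity of `A` through its last element. -/

section LowerBlock

variable {α β γ : Type*}

theorem IsPosetMatrix.comap {A : α → α → Bool} (hA : IsPosetMatrix A) {f : γ → α}
    (hf : Function.Injective f) : IsPosetMatrix (fun i j => A (f i) (f j)) :=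
  ⟨fun i => hA.1 (f i), fun i j hij => hA.2.1 (f i) (f j) (hf.ne hij),
    fun i j k => hA.2.2 (f i) (f j) (f k)⟩

def lowerBlock (R : α → α → Bool) (u : α → Bool) (S : β → β → Bool) :
    α ⊕ β → α ⊕ β → Bool
  | .inl y, .inl z => R y z
  | .inl _, .inr _ => false
  | .inr _, .inl z => u z
  | .inr p, .inr q => S p q

theorem isPosetMatrix_lowerBlock {R : α → α → Bool} {u : α → Bool} {S : β → β → Bool}
    (hR : IsPosetMatrix R) (hu : ∀ y z, u y = true → R y z = true → u z = true)
    (hS : IsPosetMatrix S) : IsPosetMatrix (lowerBlock R u S) := by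
  obtain ⟨hRrefl, hRanti, hRtrans⟩ := hR
  obtain ⟨hSrefl, hSanti, hStrans⟩ := hS
  refine ⟨?_, ?_, ?_⟩
  · rintro (y | p)
    exacts [hRrefl y, hSrefl p]
  · rintro (y | p) (z | q) hne h <;> simp only [lowerBlock, Bool.false_eq_true] at h ⊢
    · exact hRanti y z (fun e => hne (congrArg Sum.inl e)) h
    · exact hSanti p q (fun e => hne (congrArg Sum.inr e)) h
  · rintro (x | x) (y | y) (z | z) hxy hyz <;>
      simp only [lowerBlock, Bool.false_eq_true] at hxy hyz ⊢
    · exact hRtrans x y z hxy hyz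
    · exact hu y z hxy hyz
    · exact hyz
    · exact hStrans x y z hxy hyz

end LowerBlock

theorem compLast_eq_lowerBlock {n m : ℕ} (A : Fin (n + 1) → Fin (n + 1) → Bool)
    (B : Fin m → Fin m → Bool) :
    compLast A B = lowerBlock (fun y z => A y.castSucc z.castSucc)
      (fun z => A (Fin.last n) z.castSucc) B := by
  funext x y
  rcases x with _ | _ <;> rcases y with _ | _ <;> rfl

/-- The first partial composition `A ∘ₙ B` of poset matrices is a poset matrix. -/
theorem compLast_isPosetMatrix {n m : ℕ} (A : Fin (n + 1) → Fin (n + 1) → Bool)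
    (B : Fin m → Fin m → Bool) (hA : IsPosetMatrix A) (hB : IsPosetMatrix B) :
    IsPosetMatrix (compLast A B) := by
  rw [compLast_eq_lowerBlock]
  exact isPosetMatrix_lowerBlock (hA.comap (Fin.castSucc_injective n))
    (fun y z => hA.2.2 _ _ _) hB
end

section
/- Duality is compatible with the first partial composition: for poset matrices A (n×n) and B (m×m) and any index i with 1 ≤ i ≤ n, the dual of A □ᵢ B equals A* □_{n-i+1} B*, where the dual M* of a poset matrix M is obtained by reversing the order (M* j i = M (σ i) (σ j) with σ the order-reversing permutation k ↦ n+1-k, i.e. transposing and reversing index order). -/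
/-- The first partial composition `A □ᵢ B`: the row and column `i` of `A` are
deleted and replaced by a block copy of `B`.  `Sum.inl` indexes the old
elements (indices of `A` other than `i`), `Sum.inr` the new elements (indices
of `B`).  Entries between two old indices are as in `A`, between two new
indices as in `B`; a new row inherits row `i` of `A` on old columns preceding
`i`, an old row following `i` inherits the entry `A y i` on new columns, and
all remaining mixed entries are `0`. -/
def pcomp {n m : ℕ} (A : Fin n → Fin n → Bool) (B : Fin m → Fin m → Bool)
    (i : Fin n) :
    ({x : Fin n // x ≠ i} ⊕ Fin m) → ({x : Fin n // x ≠ i} ⊕ Fin m) → Bool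
  | Sum.inl y, Sum.inl z => A y.1 z.1
  | Sum.inr p, Sum.inr q => B p q
  | Sum.inr _, Sum.inl z => if z.1 < i then A i z.1 else false
  | Sum.inl y, Sum.inr _ => if i < y.1 then A y.1 i else false

/-- The dual of a poset matrix: `(A*) y z = A (rev z) (rev y)`, where
`rev k = n - 1 - k` is the order-reversing relabeling `k ↦ n + 1 - k`
(in `1`-based notation). -/
def dualM {n : ℕ} (A : Fin n → Fin n → Bool) : Fin n → Fin n → Bool :=
  fun y z => A z.rev y.rev

/-- The order-reversing relabeling of the indices of `A □ᵢ B`, matching them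
with the indices of `A* □_{n-i+1} B*`. -/
def revIdx {n m : ℕ} (i : Fin n) :
    ({x : Fin n // x ≠ i} ⊕ Fin m) → ({x : Fin n // x ≠ i.rev} ⊕ Fin m)
  | Sum.inl x => Sum.inl ⟨x.1.rev, fun h => x.2 (Fin.rev_injective h)⟩
  | Sum.inr p => Sum.inr p.rev
/-- The left-hand side is the entry of `A* □_{n-i+1} B*` at the reversed pair of indices;
the right-hand side is the `(z, y)` entry of `A □ᵢ B`, i.e. the `(y, z)` entry of its dual. -/
theorem pcomp_dual_general {n m : ℕ} (A : Fin n → Fin n → Bool)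
    (B : Fin m → Fin m → Bool) (i : Fin n) :
    ∀ y z : {x : Fin n // x ≠ i} ⊕ Fin m,
      pcomp (dualM A) (dualM B) i.rev (revIdx i y) (revIdx i z) =
        pcomp A B i z y := by
  rintro (y | p) (z | q) <;>
    simp only [pcomp, dualM, revIdx, Fin.rev_rev, Fin.rev_lt_rev]

/-- Duality is compatible with the first partial composition:
`(A □ᵢ B)* = A* □_{n-i+1} B*`.  The left-hand side below is the entry of
`A* □_{n-i+1} B*` at the reversed pair of indices, the right-hand side is the
corresponding entry of the dual of `A □ᵢ B`, i.e. the `(z, y)` entry of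
`A □ᵢ B`. -/
theorem pcomp_dual {n m : ℕ} (A : Fin n → Fin n → Bool)
    (B : Fin m → Fin m → Bool) (i : Fin n)
    (hA : IsPosetMatrix A) (hB : IsPosetMatrix B) :
    ∀ y z : {x : Fin n // x ≠ i} ⊕ Fin m,
      pcomp (dualM A) (dualM B) i.rev (revIdx i y) (revIdx i z) =
        pcomp A B i z y :=
  pcomp_dual_general A B i
end
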